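/- arXiv:1810.01282 — 16 statements merged into one kernel-verified Lean document; each statement's English description precedes it below -/
import Mathlib

section
/- Every weak nil clean ideal of a ring R is a weakly clean ideal of R. That is, if every element x of an ideal I can be written as x = e + n or x = -e + n with e idempotent in R and n nilpotent in R, then every element of I can be written as u + e or u - e with u a unit of R and e idempotent in R. -/
/-- Every weak nil clean ideal of a ring `R` is a weakly clean ideal of `R`. -/
theorem weakNilCleanIdeal_is_weaklyCleanIdeal {R : Type*} [Ring R] (I : TwoSidedIdeal R)
    (h : ∀ x ∈ I, ∃ e n : R, IsIdempotentElem e ∧ IsNilpotent n ∧ (x = e + n ∨ x = -e + n)) :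
    ∀ x ∈ I, ∃ u e : R, IsUnit u ∧ IsIdempotentElem e ∧ (x = u + e ∨ x = u - e) := by
  intro x hx
  obtain ⟨e, n, he, hn, hcase⟩ := h x hx
  rcases hcase with hxe | hxe
  · exact ⟨n + 1, 1 - e, by simpa [add_comm] using (IsNilpotent.isUnit_one_add hn),
      he.one_sub, Or.inr (by rw [hxe]; abel)⟩
  · exact ⟨n - 1, 1 - e, by simpa using (IsNilpotent.isUnit_one_sub hn).neg,
      he.one_sub, Or.inl (by rw [hxe]; abel)⟩
end

section
/- If I is a weak nil clean ideal of a ring R, then every element of the intersection of I with the Jacobson radical J(R) is nilpotent; that is, I ∩ J(R) is a nil ideal of R. -/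
/-!
Write `x = ±e + n`. Modulo `J(R)` the idempotent `e` agrees with the nilpotent `∓n`, so its
image is zero and `e ∈ J(R)`. But an idempotent in `J(R)` vanishes, leaving `x = n`.
-/

namespace IsIdempotentElem

variable {R : Type*} [Ring R] {e : R}

theorem eq_zero_of_mem_jacobson_bot (he : IsIdempotentElem e)
    (hJ : e ∈ (⊥ : Ideal R).jacobson) : e = 0 := by
  -- `1 - e` has a left inverse, and `(1 - e) * e = 0`
  obtain ⟨s, hs⟩ :=
    Ideal.exists_mul_sub_mem_of_sub_one_mem_jacobson (1 - e) (by simpa using neg_mem hJ)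
  rw [Ideal.mem_bot, sub_eq_zero] at hs
  calc e = s * (1 - e) * e := by rw [hs, one_mul]
    _ = 0 := by rw [mul_assoc, sub_mul, one_mul, he.eq, sub_self, mul_zero]

theorem mem_of_sub_mem_of_isNilpotent {J : Ideal R} [J.IsTwoSided] {m : R}
    (he : IsIdempotentElem e) (hm : IsNilpotent m) (hem : e - m ∈ J) : e ∈ J := by
  have hmk : Ideal.Quotient.mk J e = Ideal.Quotient.mk J m :=
    Ideal.Quotient.eq.mpr hem
  rw [← Ideal.Quotient.eq_zero_iff_mem]
  exact (he.map (Ideal.Quotient.mk J)).eq_zero_of_isNilpotent (hmk ▸ hm.map _)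

end IsIdempotentElem

/-- If `I` is a weak nil clean ideal of `R` then `I ∩ J(R)` is nil. -/
theorem weakNilCleanIdeal_inter_jacobson_nil {R : Type*} [Ring R] (I : TwoSidedIdeal R)
    (h : ∀ x ∈ I, ∃ e n : R, IsIdempotentElem e ∧ IsNilpotent n ∧ (x = e + n ∨ x = -e + n)) :
    ∀ x : R, x ∈ I → x ∈ (⊥ : Ideal R).jacobson → IsNilpotent x := by
  intro x hxI hxJ
  obtain ⟨e, n, he, hn, hx⟩ := h x hxI
  have he_mem : e ∈ (⊥ : Ideal R).jacobson := by
    rcases hx with rfl | rfl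
    · exact he.mem_of_sub_mem_of_isNilpotent hn.neg (by simpa using hxJ)
    · exact he.mem_of_sub_mem_of_isNilpotent hn (by simpa [neg_add_eq_sub] using neg_mem hxJ)
  have he_zero : e = 0 := he.eq_zero_of_mem_jacobson_bot he_mem
  rcases hx with rfl | rfl <;> simpa [he_zero] using hn
end

section
/- If R is a weak nil clean ring, then the Jacobson radical J(R) is contained in the set of nilpotent elements of R. -/
/-!
If `x ∈ J(R)` is written as `x = ±e + n`, then `e ≡ ∓n` modulo `J(R)`, so the image of `e` in
`R ⧸ J(R)` is a nilpotent idempotent and hence zero. Thus `e ∈ J(R)`; but `1 - e` is then a unit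
annihilating `e`, so `e = 0` and `x = n` is nilpotent.
-/

theorem IsIdempotentElem.mem_of_add_mem_of_isNilpotent {R : Type*} [Ring R] {I : Ideal R}
    [I.IsTwoSided] {e a : R} (he : IsIdempotentElem e) (ha : IsNilpotent a) (hea : e + a ∈ I) :
    e ∈ I := by
  have hmk : Ideal.Quotient.mk I e = Ideal.Quotient.mk I (-a) :=
    Ideal.Quotient.eq.2 (by rwa [sub_neg_eq_add])
  rw [← Ideal.Quotient.eq_zero_iff_mem]
  exact (he.map _).eq_zero_of_isNilpotent (hmk ▸ ha.neg.map _)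

theorem IsIdempotentElem.eq_zero_of_mem_jacobson_bot_s2 {R : Type*} [Ring R] {e : R}
    (he : IsIdempotentElem e) (hJ : e ∈ (⊥ : Ideal R).jacobson) : e = 0 := by
  obtain ⟨s, hs⟩ := Ideal.exists_mul_add_sub_mem_of_mem_jacobson (-e) (neg_mem hJ)
  have hs : s * (1 - e) = 1 := by
    rwa [Ideal.mem_bot, sub_eq_zero, neg_add_eq_sub] at hs
  calc e = s * (1 - e) * e := by rw [hs, one_mul]
    _ = 0 := by rw [mul_assoc, sub_mul, one_mul, he.eq, sub_self, mul_zero]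

/-- If `R` is a weak nil clean ring, then `J(R)` consists of nilpotents. -/
theorem jacobson_nil_of_weakNilClean {R : Type*} [Ring R]
    (h : ∀ x : R, ∃ e n : R, IsIdempotentElem e ∧ IsNilpotent n ∧ (x = e + n ∨ x = -e + n)) :
    ∀ x ∈ (⊥ : Ideal R).jacobson, IsNilpotent x := by
  intro x hx
  obtain ⟨e, n, he, hn, hx_eq⟩ := h x
  have he_mem : e ∈ (⊥ : Ideal R).jacobson := by
    rcases hx_eq with rfl | rfl
    · exact he.mem_of_add_mem_of_isNilpotent hn hx
    · refine he.mem_of_add_mem_of_isNilpotent hn.neg ?_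
      rw [← neg_neg e, ← neg_add]
      exact neg_mem hx
  have he0 := he.eq_zero_of_mem_jacobson_bot_s2 he_mem
  rcases hx_eq with rfl | rfl <;> simpa [he0] using hn
end

section
/- If an ideal I of a ring R is a strongly weak nil clean ideal, then I is a strongly weakly clean ideal, and for each a in I, either a - a² is nilpotent or a + a² is nilpotent. -/
/-!
For an idempotent `e` and a nilpotent `n` commuting with it, `e + n = -(1 - e) + (1 + n)` with
`1 + n` a unit, and `(e + n) - (e + n)² = (1 - 2e - n) n` is nilpotent. The case `-e + n` is the
negative of `e + (-n)`, and both conclusions are stable under `x ↦ -x`.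
-/

section

variable {R : Type*} [Ring R]

def IsStronglyWeaklyClean (x : R) : Prop :=
  ∃ e u : R, IsIdempotentElem e ∧ IsUnit u ∧ Commute e u ∧ (x = e + u ∨ x = -e + u)

def IsStronglyWeakNilClean (x : R) : Prop :=
  ∃ e n : R, IsIdempotentElem e ∧ IsNilpotent n ∧ Commute e n ∧ (x = e + n ∨ x = -e + n)

theorem IsStronglyWeaklyClean.neg {x : R} (hx : IsStronglyWeaklyClean x) :
    IsStronglyWeaklyClean (-x) := by
  obtain ⟨e, u, he, hu, hc, rfl | rfl⟩ := hx
  · exact ⟨e, -u, he, hu.neg, hc.neg_right, Or.inr (neg_add e u)⟩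
  · exact ⟨e, -u, he, hu.neg, hc.neg_right, Or.inl (by rw [neg_add, neg_neg])⟩

theorem isStronglyWeaklyClean_add_of_commute {e n : R} (he : IsIdempotentElem e)
    (hn : IsNilpotent n) (hc : Commute e n) : IsStronglyWeaklyClean (e + n) :=
  ⟨1 - e, 1 + n, he.one_sub, hn.isUnit_one_add,
    (Commute.one_left _).sub_left ((Commute.one_right e).add_right hc), Or.inr (by abel)⟩

theorem isNilpotent_add_sub_sq_of_commute {e n : R} (he : IsIdempotentElem e)
    (hn : IsNilpotent n) (hc : Commute e n) : IsNilpotent (e + n - (e + n) ^ 2) := by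
  have hfactor : e + n - (e + n) ^ 2 = (1 - 2 * e - n) * n := by
    rw [hc.add_sq, sq e, he.eq]
    noncomm_ring
  rw [hfactor]
  refine Commute.isNilpotent_mul_left ?_ hn
  exact ((Commute.one_left n).sub_left ((Nat.cast_commute 2 n).mul_left hc)).sub_left
    (Commute.refl n)

theorem IsStronglyWeakNilClean.isStronglyWeaklyClean {x : R} (hx : IsStronglyWeakNilClean x) :
    IsStronglyWeaklyClean x := by
  obtain ⟨e, n, he, hn, hc, rfl | rfl⟩ := hx
  · exact isStronglyWeaklyClean_add_of_commute he hn hc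
  · simpa [neg_add_rev, add_comm] using
      (isStronglyWeaklyClean_add_of_commute he hn.neg hc.neg_right).neg

theorem IsStronglyWeakNilClean.isNilpotent_sub_sq_or_add_sq {a : R}
    (ha : IsStronglyWeakNilClean a) : IsNilpotent (a - a ^ 2) ∨ IsNilpotent (a + a ^ 2) := by
  obtain ⟨e, n, he, hn, hc, rfl | rfl⟩ := ha
  · exact Or.inl (isNilpotent_add_sub_sq_of_commute he hn hc)
  · right
    have h := (isNilpotent_add_sub_sq_of_commute he hn.neg hc.neg_right).neg
    convert h using 1
    rw [show -e + n = -(e + -n) by abel, neg_sq]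
    abel

end

/-- A strongly weak nil clean ideal is a strongly weakly clean ideal,
and each `a ∈ I` has `a - a²` or `a + a²` nilpotent. -/
theorem stronglyWeakNilCleanIdeal_stronglyWeaklyClean {R : Type*} [Ring R] (I : TwoSidedIdeal R)
    (h : ∀ x ∈ I, ∃ e n : R, IsIdempotentElem e ∧ IsNilpotent n ∧ e * n = n * e ∧
      (x = e + n ∨ x = -e + n)) :
    (∀ x ∈ I, ∃ e u : R, IsIdempotentElem e ∧ IsUnit u ∧ e * u = u * e ∧
      (x = e + u ∨ x = -e + u)) ∧
    (∀ a ∈ I, IsNilpotent (a - a ^ 2) ∨ IsNilpotent (a + a ^ 2)) :=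
  ⟨fun x hx => IsStronglyWeakNilClean.isStronglyWeaklyClean (h x hx),
    fun a ha => IsStronglyWeakNilClean.isNilpotent_sub_sq_or_add_sq (h a ha)⟩
end

section
/- Let a be an element of a ring R such that a = e + u with e idempotent, u a unit, eu = ue, and a - a² nilpotent. Then a can be written as a = f + n with f idempotent, n nilpotent, and fn = nf. -/
/-!
For `a = e + u` with `e` idempotent commuting with `u`, expanding the square gives
`a - a² = -u (a - (1 - e))`. Since `u` is a unit commuting with `a - (1 - e)`, nilpotency of
`a - a²` passes to `a - (1 - e)`, so `a = (1 - e) + (a - (1 - e))` is the required decomposition.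
-/

namespace IsIdempotentElem

variable {R : Type*} [Ring R] {e u : R}

theorem add_sub_add_sq (he : IsIdempotentElem e) (h : Commute e u) :
    e + u - (e + u) ^ 2 = -(u * (e + u - (1 - e))) := by
  rw [sq, add_mul, mul_add, mul_add, he.eq, h.eq]
  noncomm_ring

theorem isNilpotent_add_sub_one_sub (he : IsIdempotentElem e) (hu : IsUnit u)
    (h : Commute e u) (hnil : IsNilpotent (e + u - (e + u) ^ 2)) :
    IsNilpotent (e + u - (1 - e)) := by
  have hcomm : Commute (e + u - (1 - e)) u :=
    (h.add_left (Commute.refl u)).sub_left ((Commute.one_left u).sub_left h)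
  rw [he.add_sub_add_sq h, isNilpotent_neg_iff] at hnil
  exact (hu.isNilpotent_unit_mul_of_commute_iff hcomm).mp hnil

end IsIdempotentElem

/-- If `a = e + u` with `e` idempotent, `u` a unit, `eu = ue` and `a - a²`
nilpotent, then `a` is strongly nil clean. -/
theorem stronglyNilClean_of_stronglyClean_of_nilpotent_sub_sq {R : Type*} [Ring R]
    (a e u : R) (he : IsIdempotentElem e) (hu : IsUnit u) (hcomm : e * u = u * e)
    (ha : a = e + u) (hnil : IsNilpotent (a - a ^ 2)) :
    ∃ f n : R, IsIdempotentElem f ∧ IsNilpotent n ∧ f * n = n * f ∧ a = f + n := by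
  subst ha
  have hea : Commute (1 - e) (e + u) :=
    ((Commute.one_left _).sub_left (Commute.refl e)).add_right
      ((Commute.one_left u).sub_left hcomm)
  exact ⟨1 - e, e + u - (1 - e), he.one_sub, he.isNilpotent_add_sub_one_sub hu hcomm hnil,
    hea.sub_right (Commute.refl _), by abel⟩
end

section
/- Every idempotent belonging to a uniquely weak nil clean ideal I of a ring R is central in R. -/
/-- Every idempotent in a uniquely weak nil clean ideal is central. -/
theorem idempotent_central_of_uniquelyWeakNilCleanIdeal {R : Type*} [Ring R]
    (I : TwoSidedIdeal R)
    (h : ∀ x ∈ I, ∃! e : R, IsIdempotentElem e ∧ (IsNilpotent (x - e) ∨ IsNilpotent (x + e)))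
    (e : R) (heI : e ∈ I) (he : IsIdempotentElem e) :
    ∀ x : R, e * x = x * e := by
  have he' : e * e = e := he
  intro x
  obtain ⟨c, _, hu⟩ := h e heI
  have hec : e = c := hu e ⟨he, Or.inl (by simp)⟩
  -- key: any square-zero a with e*a = a, a*e = 0 (or symmetrically) in I is 0
  have key : ∀ a : R, a * a = 0 → (e + a) * (e + a) = e + a → a ∈ I → a = 0 := by
    intro a ha hidem hmem
    have hnil : IsNilpotent (e - (e + a)) := ⟨2, by simp [pow_two, ha]⟩
    have h2 : e + a = c := hu (e + a) ⟨hidem, Or.inl hnil⟩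
    have h3 : e + a = e := h2.trans hec.symm
    exact add_eq_left.mp h3
  have h1 : e * x - e * x * e = 0 := by
    have hae0 : (e * x - e * x * e) * e = 0 := by simp [sub_mul, mul_assoc, he']
    apply key
    · simp [mul_sub, ← mul_assoc, hae0]
    · have hea : e * (e * x - e * x * e) = e * x - e * x * e := by
        simp [mul_sub, ← mul_assoc, he']
      rw [mul_add, add_mul, add_mul, he', hea, hae0, add_zero]
      have : (e * x - e * x * e) * (e * x - e * x * e) = 0 := by
        simp [mul_sub, ← mul_assoc, hae0]
      rw [this, add_zero]
    · exact I.sub_mem (I.mul_mem_right _ _ heI) (I.mul_mem_right _ _ (I.mul_mem_right _ _ heI))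
  have h2 : x * e - e * x * e = 0 := by
    have heb0 : e * (x * e - e * x * e) = 0 := by simp [mul_sub, ← mul_assoc, he']
    have hbe : (x * e - e * x * e) * e = x * e - e * x * e := by
      simp [sub_mul, mul_assoc, he']
    have hbb : (x * e - e * x * e) * (x * e - e * x * e) = 0 := by
      calc (x * e - e * x * e) * (x * e - e * x * e)
          = x * (e * (x * e - e * x * e)) - (e * x) * (e * (x * e - e * x * e)) := by
            rw [sub_mul, mul_assoc x e, mul_assoc (e*x) e]
        _ = 0 := by rw [heb0, mul_zero, mul_zero, sub_zero]
    apply key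
    · exact hbb
    · rw [mul_add, add_mul, add_mul, he', heb0, hbe, hbb]; simp
    · exact I.sub_mem (I.mul_mem_left _ _ heI) (I.mul_mem_right _ _ (I.mul_mem_right _ _ heI))
  rw [sub_eq_zero] at h1 h2
  rw [h1, h2]
end

section
/- An ideal I of a ring R is a weak nil clean ideal if and only if for every x in I there exist an idempotent e belonging to I and a nilpotent n belonging to I such that x = e + n or x = -e + n. In particular, in any weak nil clean decomposition of an element of I, the idempotent and nilpotent parts automatically lie in I. -/
private lemma pow_sub_pow_mem' {R : Type*} [Ring R] (I : TwoSidedIdeal R) {a b : R}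
    (h : a - b ∈ I) : ∀ k : ℕ, a ^ k - b ^ k ∈ I := by
  intro k
  induction k with
  | zero => simp only [pow_zero, sub_self]; exact I.zero_mem
  | succ k ih =>
      have : a ^ (k + 1) - b ^ (k + 1) = a ^ k * (a - b) + (a ^ k - b ^ k) * b := by
        noncomm_ring
      rw [this]
      exact add_mem (I.mul_mem_left _ _ h) (I.mul_mem_right _ _ ih)

/-- `I` is weak nil clean iff each `x ∈ I` has a weak nil clean decomposition
with idempotent and nilpotent parts in `I`. -/
theorem weakNilCleanIdeal_iff_decomposition_in_ideal {R : Type*} [Ring R] (I : TwoSidedIdeal R) :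
    (∀ x ∈ I, ∃ e n : R, IsIdempotentElem e ∧ IsNilpotent n ∧ (x = e + n ∨ x = -e + n)) ↔
    (∀ x ∈ I, ∃ e n : R, e ∈ I ∧ n ∈ I ∧ IsIdempotentElem e ∧ IsNilpotent n ∧
      (x = e + n ∨ x = -e + n)) := by
  constructor
  · intro h x hx
    obtain ⟨e, n, he, ⟨k, hk⟩, hcase⟩ := h x hx
    have hnk : n ^ (k + 1) = 0 := by rw [pow_succ, hk, zero_mul]
    have hek : e ^ (k + 1) = e := he.pow_succ_eq k
    rcases hcase with hxe | hxe
    · -- e - (-n) = x ∈ I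
      have h1 : e - (-n) ∈ I := by
        have : e - (-n) = x := by rw [hxe]; noncomm_ring
        rw [this]; exact hx
      have h2 := pow_sub_pow_mem' I h1 (k + 1)
      have hnn : (-n) ^ (k + 1) = 0 := by
        rw [neg_pow, hnk, mul_zero]
      rw [hek, hnn, sub_zero] at h2
      have hnI : n ∈ I := by
        have : n = x - e := by rw [hxe]; noncomm_ring
        rw [this]; exact sub_mem hx h2
      exact ⟨e, n, h2, hnI, he, ⟨k, hk⟩, Or.inl hxe⟩
    · -- e - n = -x ∈ I
      have h1 : e - n ∈ I := by
        have : e - n = -x := by rw [hxe]; noncomm_ring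
        rw [this]; exact neg_mem hx
      have h2 := pow_sub_pow_mem' I h1 (k + 1)
      rw [hek, hnk, sub_zero] at h2
      have hnI : n ∈ I := by
        have : n = x + e := by rw [hxe]; abel
        rw [this]; exact add_mem hx h2
      exact ⟨e, n, h2, hnI, he, ⟨k, hk⟩, Or.inr hxe⟩
  · intro h x hx
    obtain ⟨e, n, _, _, he, hn, hc⟩ := h x hx
    exact ⟨e, n, he, hn, hc⟩
end

section
/- If R is a ring whose only idempotents are 0 and 1, then every proper weak nil clean ideal of R is a nil ideal. -/
/-- If the only idempotents of `R` are `0` and `1`, then every proper weak nil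
clean ideal of `R` is nil. -/
theorem proper_weakNilCleanIdeal_nil_of_no_nontrivial_idempotents {R : Type*} [Ring R]
    (hidem : ∀ e : R, IsIdempotentElem e → e = 0 ∨ e = 1)
    (I : TwoSidedIdeal R) (hI : I ≠ ⊤)
    (h : ∀ x ∈ I, ∃ e n : R, IsIdempotentElem e ∧ IsNilpotent n ∧ (x = e + n ∨ x = -e + n)) :
    ∀ x ∈ I, IsNilpotent x := by
  intro x hx
  obtain ⟨e, n, he, hn, hcase⟩ := h x hx
  rcases hidem e he with rfl | rfl
  · rcases hcase with rfl | rfl <;> simpa using hn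
  · exfalso
    apply hI
    apply TwoSidedIdeal.eq_top
    have hu : IsUnit x := by
      rcases hcase with rfl | rfl
      · exact hn.isUnit_one_add
      · have := (hn.neg).isUnit_one_add
        have h2 : -(1 + -n) = -1 + n := by rw [neg_add, neg_neg]
        simpa [h2] using this.neg
    obtain ⟨u, rfl⟩ := hu
    have : ((u⁻¹ : Rˣ) : R) * u ∈ I := I.mul_mem_left _ _ hx
    simpa using this
end

section
/- A ring R is weak nil clean if and only if there exists a central idempotent e in R such that the ideals generated by e and by 1 - e are both weak nil clean ideals of R and at least one of them is a nil clean ideal of R. -/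
private lemma aux_idem {R : Type*} [Ring R] {e f : R} (he : IsIdempotentElem e)
    (hf : IsIdempotentElem f) (hcomm : e * f = f * e) : IsIdempotentElem (f * e) := by
  unfold IsIdempotentElem at *
  rw [mul_assoc f e (f * e), ← mul_assoc e f e, hcomm, mul_assoc f e e,
    ← mul_assoc f f (e * e), hf, he]

private lemma aux_nil {R : Type*} [Ring R] {e n : R} (hn : IsNilpotent n)
    (hcomm : e * n = n * e) : IsNilpotent (n * e) := by
  obtain ⟨k, hk⟩ := hn
  have hco : Commute n e := hcomm.symm
  exact ⟨k, by rw [hco.mul_pow, hk, zero_mul]⟩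

private lemma aux_plus {R : Type*} [Ring R] {e x f n g m : R}
    (he : IsIdempotentElem e) (hc : e ∈ Set.center R)
    (hf : IsIdempotentElem f) (hn : IsNilpotent n)
    (hg : IsIdempotentElem g) (hm : IsNilpotent m)
    (hx1 : x * e = f * e + n * e) (hx2 : x * (1 - e) = g + m) :
    ∃ F N : R, IsIdempotentElem F ∧ IsNilpotent N ∧ x = F + N := by
  have hcomm : ∀ r : R, e * r = r * e := fun r => (Semigroup.mem_center_iff.mp hc r).symm
  have he' : IsIdempotentElem (1 - e) := he.one_sub
  have hcomm' : ∀ r : R, (1 - e) * r = r * (1 - e) := by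
    intro r; rw [sub_mul, mul_sub, one_mul, mul_one, hcomm]
  set e' := 1 - e with he'def
  have hfe : IsIdempotentElem (f * e) := aux_idem he hf (hcomm f)
  have hne : IsNilpotent (n * e) := aux_nil hn (hcomm n)
  have hge : IsIdempotentElem (g * e') := aux_idem he' hg (hcomm' g)
  have hme : IsNilpotent (m * e') := aux_nil hm (hcomm' m)
  have hxee : x * e' = g * e' + m * e' := by
    have : x * e' * e' = (g + m) * e' := by rw [← hx2]
    rw [mul_assoc, he', add_mul] at this
    exact this
  have hee' : e * e' = 0 := by rw [he'def, mul_sub, mul_one, he, sub_self]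
  have he'e : e' * e = 0 := by rw [he'def, sub_mul, one_mul, he, sub_self]
  have swap : ∀ a b : R, (a * e) * (b * e') = 0 := by
    intro a b
    rw [mul_assoc a e (b * e'), ← mul_assoc e b e', hcomm b, mul_assoc b e e', hee',
      mul_zero, mul_zero]
  have swap' : ∀ a b : R, (a * e') * (b * e) = 0 := by
    intro a b
    rw [mul_assoc a e' (b * e), ← mul_assoc e' b e, hcomm' b, mul_assoc b e' e, he'e,
      mul_zero, mul_zero]
  refine ⟨f * e + g * e', n * e + m * e', ?_, ?_, ?_⟩
  · unfold IsIdempotentElem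
    rw [add_mul, mul_add, mul_add, swap, swap', hfe, hge, add_zero, zero_add]
  · have hcom : Commute (n * e) (m * e') := by
      unfold Commute SemiconjBy
      rw [swap, swap']
    exact hcom.isNilpotent_add hne hme
  · have hx : x = x * e + x * e' := by rw [← mul_add, he'def, add_sub_cancel, mul_one]
    rw [hx, hx1, hxee]; abel

private lemma aux_main {R : Type*} [Ring R] {e : R} (he : IsIdempotentElem e)
    (hc : e ∈ Set.center R)
    (hw : ∀ x ∈ TwoSidedIdeal.span {e}, ∃ f n : R, IsIdempotentElem f ∧ IsNilpotent n ∧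
        (x = f + n ∨ x = -f + n))
    (hnc : ∀ x ∈ TwoSidedIdeal.span {(1 : R) - e}, ∃ f n : R, IsIdempotentElem f ∧ IsNilpotent n ∧
        x = f + n) (x : R) :
    ∃ f n : R, IsIdempotentElem f ∧ IsNilpotent n ∧ (x = f + n ∨ x = -f + n) := by
  have hxe : x * e ∈ TwoSidedIdeal.span {e} :=
    TwoSidedIdeal.mul_mem_left _ _ _ (TwoSidedIdeal.subset_span rfl)
  obtain ⟨f, n, hf, hn, hfn⟩ := hw _ hxe
  rcases hfn with h | h
  · obtain ⟨g, m, hg, hm, hgm⟩ := hnc (x * (1 - e))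
      (TwoSidedIdeal.mul_mem_left _ _ _ (TwoSidedIdeal.subset_span rfl))
    have hx1 : x * e = f * e + n * e := by
      have : x * e * e = (f + n) * e := by rw [← h]
      rwa [mul_assoc, he, add_mul] at this
    obtain ⟨F, N, hF, hN, hFN⟩ := aux_plus he hc hf hn hg hm hx1 hgm
    exact ⟨F, N, hF, hN, Or.inl hFN⟩
  · obtain ⟨g, m, hg, hm, hgm⟩ := hnc ((-x) * (1 - e))
      (TwoSidedIdeal.mul_mem_left _ _ _ (TwoSidedIdeal.subset_span rfl))
    have hx1 : (-x) * e = f * e + (-n) * e := by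
      have : x * e * e = (-f + n) * e := by rw [← h]
      rw [mul_assoc, he, add_mul, neg_mul] at this
      rw [neg_mul, this, neg_mul]; abel
    obtain ⟨F, N, hF, hN, hFN⟩ := aux_plus he hc hf (by simpa using hn.neg) hg hm hx1 hgm
    refine ⟨F, -N, hF, hN.neg, Or.inr ?_⟩
    have hx : x = -(F + N) := by rw [← hFN, neg_neg]
    rw [hx, neg_add]

/-- `R` is weak nil clean iff there is a central idempotent `e` such that
`⟨e⟩` and `⟨1 - e⟩` are weak nil clean ideals and at least one of them is nil clean. -/
theorem weakNilClean_iff_central_idempotent_ideals {R : Type*} [Ring R] :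
    (∀ x : R, ∃ e n : R, IsIdempotentElem e ∧ IsNilpotent n ∧ (x = e + n ∨ x = -e + n)) ↔
    (∃ e : R, IsIdempotentElem e ∧ e ∈ Set.center R ∧
      (∀ x ∈ TwoSidedIdeal.span {e}, ∃ f n : R, IsIdempotentElem f ∧ IsNilpotent n ∧
        (x = f + n ∨ x = -f + n)) ∧
      (∀ x ∈ TwoSidedIdeal.span {1 - e}, ∃ f n : R, IsIdempotentElem f ∧ IsNilpotent n ∧
        (x = f + n ∨ x = -f + n)) ∧
      ((∀ x ∈ TwoSidedIdeal.span {e}, ∃ f n : R, IsIdempotentElem f ∧ IsNilpotent n ∧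
        x = f + n) ∨
       (∀ x ∈ TwoSidedIdeal.span {(1 : R) - e}, ∃ f n : R, IsIdempotentElem f ∧ IsNilpotent n ∧
        x = f + n))) := by
  constructor
  · intro h
    refine ⟨1, IsIdempotentElem.one, Set.one_mem_center, fun x _ => h x, fun x _ => h x, Or.inr ?_⟩
    intro x hx
    have hx0 : x = 0 := by
      have := TwoSidedIdeal.mem_span_iff.mp hx ⊥ (by simp [TwoSidedIdeal.mem_bot])
      rwa [TwoSidedIdeal.mem_bot] at this
    exact ⟨0, 0, IsIdempotentElem.zero, IsNilpotent.zero, by simp [hx0]⟩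
  · rintro ⟨e, he, hc, hwe, hwe', hnc | hnc⟩
    · have he' : IsIdempotentElem (1 - e) := he.one_sub
      have hcomm : ∀ r : R, r * e = e * r := fun r => Semigroup.mem_center_iff.mp hc r
      have hc' : (1 - e) ∈ Set.center R := Semigroup.mem_center_iff.mpr fun g => by
        rw [mul_sub, sub_mul, mul_one, one_mul, hcomm]
      have hspan : (1 : R) - (1 - e) = e := by abel
      intro x
      exact aux_main he' hc' hwe' (by rw [hspan]; exact hnc) x
    · exact aux_main he hc hwe hnc
end

section
/- Let R be a ring and I an ideal of R containing a nil ideal N of R (with N ⊆ I). Then I is a weak nil clean ideal of R if and only if I/N is a weak nil clean ideal of R/N. -/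
/-!
Along a surjection `f` with nil kernel, lift the idempotent of a decomposition `f x = ±e + n`
to an idempotent `e'` of `R`; then `x ∓ e'` maps to the nilpotent part, and an element whose
image is nilpotent is itself nilpotent because a power of it lies in the nil kernel.
-/

section

variable {R S : Type*} [Ring R] [Ring S]

def IsWeakNilClean (x : R) : Prop :=
  ∃ e n : R, IsIdempotentElem e ∧ IsNilpotent n ∧ (x = e + n ∨ x = -e + n)

theorem IsNilpotent.of_map_of_ker_isNilpotent (f : R →+* S)
    (hf : ∀ x ∈ RingHom.ker f, IsNilpotent x) {x : R} (hx : IsNilpotent (f x)) :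
    IsNilpotent x := by
  obtain ⟨k, hk⟩ := hx
  exact .of_pow (hf _ (by rwa [RingHom.mem_ker, map_pow]))

theorem IsWeakNilClean.map {x : R} (hx : IsWeakNilClean x) (f : R →+* S) :
    IsWeakNilClean (f x) := by
  obtain ⟨e, n, he, hn, rfl | rfl⟩ := hx
  · exact ⟨f e, f n, he.map f, hn.map f, .inl (map_add f e n)⟩
  · exact ⟨f e, f n, he.map f, hn.map f, .inr (by rw [map_add, map_neg])⟩

theorem IsWeakNilClean.of_map (f : R →+* S) (hsurj : Function.Surjective f)
    (hf : ∀ x ∈ RingHom.ker f, IsNilpotent x) {x : R} (hx : IsWeakNilClean (f x)) :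
    IsWeakNilClean x := by
  obtain ⟨e, n, he, hn, hxen⟩ := hx
  obtain ⟨e', he', rfl⟩ := exists_isIdempotentElem_eq_of_ker_isNilpotent f hf e (hsurj e) he
  rcases hxen with hxen | hxen
  · refine ⟨e', x - e', he', .of_map_of_ker_isNilpotent f hf ?_, .inl (add_sub_cancel e' x).symm⟩
    rwa [map_sub, hxen, add_sub_cancel_left]
  · refine ⟨e', x + e', he', .of_map_of_ker_isNilpotent f hf ?_, .inr (by abel)⟩
    rwa [map_add, hxen, add_comm, add_neg_cancel_left]

theorem isWeakNilClean_map_iff (f : R →+* S) (hsurj : Function.Surjective f)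
    (hf : ∀ x ∈ RingHom.ker f, IsNilpotent x) {x : R} :
    IsWeakNilClean (f x) ↔ IsWeakNilClean x :=
  ⟨.of_map f hsurj hf, (.map · f)⟩

end

theorem weakNilCleanIdeal_iff_quotient_by_nil_general {R : Type*} [Ring R]
    (N I : TwoSidedIdeal R) (hN : ∀ x ∈ N, IsNilpotent x) :
    (∀ x ∈ I, ∃ e n : R, IsIdempotentElem e ∧ IsNilpotent n ∧ (x = e + n ∨ x = -e + n)) ↔
    (∀ x ∈ I, ∃ e n : N.ringCon.Quotient, IsIdempotentElem e ∧ IsNilpotent n ∧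
      (N.ringCon.mk' x = e + n ∨ N.ringCon.mk' x = -e + n)) := by
  have hker : ∀ x ∈ RingHom.ker N.ringCon.mk', IsNilpotent x := fun x hx ↦
    hN x (by rwa [← TwoSidedIdeal.ker_ringCon_mk' N, TwoSidedIdeal.mem_ker])
  exact forall₂_congr fun x _ ↦
    (isWeakNilClean_map_iff N.ringCon.mk' N.ringCon.mk'_surjective hker).symm

/-- For a nil ideal `N ⊆ I`, `I` is weak nil clean in `R` iff `I/N` is weak
nil clean in `R/N`. -/
theorem weakNilCleanIdeal_iff_quotient_by_nil {R : Type*} [Ring R]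
    (N I : TwoSidedIdeal R) (hN : ∀ x ∈ N, IsNilpotent x) (hNI : ∀ x ∈ N, x ∈ I) :
    (∀ x ∈ I, ∃ e n : R, IsIdempotentElem e ∧ IsNilpotent n ∧ (x = e + n ∨ x = -e + n)) ↔
    (∀ x ∈ I, ∃ e n : N.ringCon.Quotient, IsIdempotentElem e ∧ IsNilpotent n ∧
      (N.ringCon.mk' x = e + n ∨ N.ringCon.mk' x = -e + n)) :=
  weakNilCleanIdeal_iff_quotient_by_nil_general N I hN
end

section
/- The image of a weak nil clean ideal under a surjective ring homomorphism is a weak nil clean ideal. That is, if f : R → S is a surjective ring homomorphism and I is a weak nil clean ideal of R, then f(I) is a weak nil clean ideal of S. -/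
/-- The image of a weak nil clean ideal under a surjective ring homomorphism
is a weak nil clean ideal. -/
theorem weakNilCleanIdeal_image {R S : Type*} [Ring R] [Ring S] (f : R →+* S)
    (hf : Function.Surjective f) (I : TwoSidedIdeal R)
    (h : ∀ x ∈ I, ∃ e n : R, IsIdempotentElem e ∧ IsNilpotent n ∧ (x = e + n ∨ x = -e + n)) :
    ∀ y ∈ f '' (I : Set R), ∃ e n : S, IsIdempotentElem e ∧ IsNilpotent n ∧
      (y = e + n ∨ y = -e + n) := by
  rintro y ⟨x, hx, rfl⟩
  obtain ⟨e, n, he, hn, hx'⟩ := h x hx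
  refine ⟨f e, f n, ?_, hn.map f, ?_⟩
  · unfold IsIdempotentElem at he ⊢
    rw [← map_mul, he]
  · rcases hx' with h1 | h1 <;> [left; right] <;> simp [h1, map_add]
end

section
/- Let R₁ and R₂ be rings with ideals I₁ and I₂. The ideal I₁ × I₂ of R₁ × R₂ is a weak nil clean ideal if and only if each Iₖ is a weak nil clean ideal of Rₖ and at least one of I₁, I₂ is a nil clean ideal. -/
private lemma nilp_pair {R₁ R₂ : Type*} [Ring R₁] [Ring R₂] {a : R₁} {b : R₂}
    (ha : IsNilpotent a) (hb : IsNilpotent b) : IsNilpotent ((a, b) : R₁ × R₂) := by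
  obtain ⟨j, hj⟩ := ha
  obtain ⟨k, hk⟩ := hb
  exact ⟨j + k, Prod.ext (by simp [Prod.pow_fst, pow_add, hj]) (by simp [Prod.pow_snd, pow_add, hk])⟩

private lemma nilp_fst {R₁ R₂ : Type*} [Ring R₁] [Ring R₂] {n : R₁ × R₂}
    (h : IsNilpotent n) : IsNilpotent n.1 := by
  obtain ⟨k, hk⟩ := h
  exact ⟨k, by rw [← Prod.pow_fst, hk]; rfl⟩

private lemma nilp_snd {R₁ R₂ : Type*} [Ring R₁] [Ring R₂] {n : R₁ × R₂}
    (h : IsNilpotent n) : IsNilpotent n.2 := by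
  obtain ⟨k, hk⟩ := h
  exact ⟨k, by rw [← Prod.pow_snd, hk]; rfl⟩

/-- `I₁ × I₂` is a weak nil clean ideal of `R₁ × R₂` iff each `Iₖ` is a weak
nil clean ideal of `Rₖ` and at least one of them is a nil clean ideal. -/
theorem weakNilCleanIdeal_prod_iff {R₁ R₂ : Type*} [Ring R₁] [Ring R₂]
    (I₁ : TwoSidedIdeal R₁) (I₂ : TwoSidedIdeal R₂) :
    (∀ x : R₁ × R₂, x.1 ∈ I₁ → x.2 ∈ I₂ → ∃ e n : R₁ × R₂, IsIdempotentElem e ∧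
      IsNilpotent n ∧ (x = e + n ∨ x = -e + n)) ↔
    ((∀ x ∈ I₁, ∃ e n : R₁, IsIdempotentElem e ∧ IsNilpotent n ∧ (x = e + n ∨ x = -e + n)) ∧
     (∀ x ∈ I₂, ∃ e n : R₂, IsIdempotentElem e ∧ IsNilpotent n ∧ (x = e + n ∨ x = -e + n)) ∧
     ((∀ x ∈ I₁, ∃ e n : R₁, IsIdempotentElem e ∧ IsNilpotent n ∧ x = e + n) ∨
      (∀ x ∈ I₂, ∃ e n : R₂, IsIdempotentElem e ∧ IsNilpotent n ∧ x = e + n))) := by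
  constructor
  · intro h
    refine ⟨?_, ?_, ?_⟩
    · intro x hx
      obtain ⟨e, n, he, hn, hc⟩ := h (x, 0) hx I₂.zero_mem
      refine ⟨e.1, n.1, congrArg Prod.fst he, nilp_fst hn, ?_⟩
      rcases hc with hc | hc
      · exact Or.inl (congrArg Prod.fst hc)
      · exact Or.inr (congrArg Prod.fst hc)
    · intro x hx
      obtain ⟨e, n, he, hn, hc⟩ := h (0, x) I₁.zero_mem hx
      refine ⟨e.2, n.2, congrArg Prod.snd he, nilp_snd hn, ?_⟩
      rcases hc with hc | hc
      · exact Or.inl (congrArg Prod.snd hc)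
      · exact Or.inr (congrArg Prod.snd hc)
    · by_contra hc
      push_neg at hc
      obtain ⟨⟨a, ha, h1⟩, ⟨b, hb, h2⟩⟩ := hc
      obtain ⟨e, n, he, hn, hcase⟩ := h (a, -b) ha (I₂.neg_mem hb)
      rcases hcase with heq | heq
      · exact h1 e.1 n.1 (congrArg Prod.fst he) (nilp_fst hn) (congrArg Prod.fst heq)
      · have hb2 : -b = -e.2 + n.2 := congrArg Prod.snd heq
        have : b = e.2 + (-n.2) := by rw [← neg_neg b, hb2]; abel
        exact h2 e.2 (-n.2) (congrArg Prod.snd he) (IsNilpotent.neg (nilp_snd hn)) this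
  · rintro ⟨h1, h2, h3 | h3⟩ <;> intro x hx1 hx2
    · obtain ⟨e₂, n₂, he₂, hn₂, hc₂⟩ := h2 x.2 hx2
      rcases hc₂ with hc₂ | hc₂
      · obtain ⟨e₁, n₁, he₁, hn₁, hc₁⟩ := h3 x.1 hx1
        exact ⟨(e₁, e₂), (n₁, n₂), Prod.ext he₁ he₂, nilp_pair hn₁ hn₂,
          Or.inl (Prod.ext hc₁ hc₂)⟩
      · obtain ⟨f, m, hf, hm, hcf⟩ := h3 (-x.1) (I₁.neg_mem hx1)
        have hx1' : x.1 = -f + (-m) := by rw [← neg_neg x.1, hcf]; abel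
        exact ⟨(f, e₂), (-m, n₂), Prod.ext hf he₂, nilp_pair hm.neg hn₂,
          Or.inr (Prod.ext hx1' hc₂)⟩
    · obtain ⟨e₁, n₁, he₁, hn₁, hc₁⟩ := h1 x.1 hx1
      rcases hc₁ with hc₁ | hc₁
      · obtain ⟨e₂, n₂, he₂, hn₂, hc₂⟩ := h3 x.2 hx2
        exact ⟨(e₁, e₂), (n₁, n₂), Prod.ext he₁ he₂, nilp_pair hn₁ hn₂,
          Or.inl (Prod.ext hc₁ hc₂)⟩
      · obtain ⟨f, m, hf, hm, hcf⟩ := h3 (-x.2) (I₂.neg_mem hx2)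
        have hx2' : x.2 = -f + (-m) := by rw [← neg_neg x.2, hcf]; abel
        exact ⟨(e₁, f), (n₁, -m), Prod.ext he₁ hf, nilp_pair hn₁ hm.neg,
          Or.inr (Prod.ext hc₁ hx2')⟩
end

section
/- Let T be the ring of 2×2 upper triangular matrices over a ring R, and let S be the ideal consisting of matrices with (1,1)-entry in an ideal I of R, (2,2)-entry in an ideal J of R, and arbitrary (1,2)-entry. Then S is a weak nil clean ideal of T if and only if I and J are weak nil clean ideals of R and at least one of them is a nil clean ideal of R. -/
private lemma tri_pow {R : Type*} [Ring R] (n : Matrix (Fin 2) (Fin 2) R) (h : n 1 0 = 0) :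
    ∀ k, (n ^ k) 1 0 = 0 ∧ (n ^ k) 0 0 = (n 0 0) ^ k ∧ (n ^ k) 1 1 = (n 1 1) ^ k
  | 0 => by simp [Matrix.one_apply]
  | k + 1 => by
    obtain ⟨h10, h00, h11⟩ := tri_pow n h k
    refine ⟨?_, ?_, ?_⟩ <;>
      simp [pow_succ, Matrix.mul_apply, Fin.sum_univ_two, h10, h00, h11, h]

private lemma tri_nilpotent {R : Type*} [Ring R] (n : Matrix (Fin 2) (Fin 2) R) (h : n 1 0 = 0)
    (h0 : IsNilpotent (n 0 0)) (h1 : IsNilpotent (n 1 1)) : IsNilpotent n := by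
  obtain ⟨p, hp⟩ := h0
  obtain ⟨q, hq⟩ := h1
  refine ⟨p + q, ?_⟩
  obtain ⟨hp10, hp00, hp11⟩ := tri_pow n h p
  obtain ⟨hq10, hq00, hq11⟩ := tri_pow n h q
  rw [pow_add]
  ext i j
  fin_cases i <;> fin_cases j <;>
    simp [Matrix.mul_apply, Fin.sum_univ_two, hp10, hq10, hp00, hq11, hp, hq]

private lemma tri_idem_diag {R : Type*} [Ring R] (e : Matrix (Fin 2) (Fin 2) R) (h : e 1 0 = 0)
    (he : IsIdempotentElem e) : IsIdempotentElem (e 0 0) ∧ IsIdempotentElem (e 1 1) := by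
  constructor
  · have := congrFun (congrFun he 0) 0
    simpa [Matrix.mul_apply, Fin.sum_univ_two, h, IsIdempotentElem] using this
  · have := congrFun (congrFun he 1) 1
    simpa [Matrix.mul_apply, Fin.sum_univ_two, h, IsIdempotentElem] using this

private lemma diag_idem {R : Type*} [Ring R] {a b : R} (ha : IsIdempotentElem a)
    (hb : IsIdempotentElem b) : IsIdempotentElem (!![a, 0; 0, b]) := by
  unfold IsIdempotentElem at *
  ext i j
  fin_cases i <;> fin_cases j <;>
    simp [Matrix.mul_apply, Fin.sum_univ_two, ha, hb]

/-- For 2×2 upper triangular matrices, the ideal `S = [[I, R],[0, J]]` is weak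
nil clean iff `I` and `J` are weak nil clean ideals of `R` and at least one is nil clean. -/
theorem weakNilCleanIdeal_triangular_iff {R : Type*} [Ring R]
    (I J : TwoSidedIdeal R) :
    (∀ x : Matrix (Fin 2) (Fin 2) R, x 1 0 = 0 → x 0 0 ∈ I → x 1 1 ∈ J →
      ∃ e n : Matrix (Fin 2) (Fin 2) R, e 1 0 = 0 ∧ n 1 0 = 0 ∧ IsIdempotentElem e ∧
        IsNilpotent n ∧ (x = e + n ∨ x = -e + n)) ↔
    ((∀ a ∈ I, ∃ e n : R, IsIdempotentElem e ∧ IsNilpotent n ∧ (a = e + n ∨ a = -e + n)) ∧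
     (∀ b ∈ J, ∃ e n : R, IsIdempotentElem e ∧ IsNilpotent n ∧ (b = e + n ∨ b = -e + n)) ∧
     ((∀ a ∈ I, ∃ e n : R, IsIdempotentElem e ∧ IsNilpotent n ∧ a = e + n) ∨
      (∀ b ∈ J, ∃ e n : R, IsIdempotentElem e ∧ IsNilpotent n ∧ b = e + n))) := by
  constructor
  · intro H
    refine ⟨?_, ?_, ?_⟩
    · intro a ha
      obtain ⟨e, n, he10, hn10, he, hn, hx⟩ :=
        H !![a, 0; 0, 0] (by simp) (by simpa using ha) (by simpa using J.zero_mem)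
      obtain ⟨he0, -⟩ := tri_idem_diag e he10 he
      obtain ⟨-, hn0, -⟩ := tri_pow n hn10 1
      refine ⟨e 0 0, n 0 0, he0, ?_, ?_⟩
      · obtain ⟨k, hk⟩ := hn
        exact ⟨k, by have := (tri_pow n hn10 k).2.1; rw [hk] at this; simpa using this.symm⟩
      · rcases hx with hx | hx
        · left; have := congrFun (congrFun hx 0) 0; simpa using this
        · right; have := congrFun (congrFun hx 0) 0; simpa using this
    · intro b hb
      obtain ⟨e, n, he10, hn10, he, hn, hx⟩ :=
        H !![0, 0; 0, b] (by simp) (by simpa using I.zero_mem) (by simpa using hb)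
      obtain ⟨-, he1⟩ := tri_idem_diag e he10 he
      refine ⟨e 1 1, n 1 1, he1, ?_, ?_⟩
      · obtain ⟨k, hk⟩ := hn
        exact ⟨k, by have := (tri_pow n hn10 k).2.2; rw [hk] at this; simpa using this.symm⟩
      · rcases hx with hx | hx
        · left; have := congrFun (congrFun hx 1) 1; simpa using this
        · right; have := congrFun (congrFun hx 1) 1; simpa using this
    · by_contra hcon
      push_neg at hcon
      obtain ⟨⟨a, ha, hA⟩, ⟨b, hb, hB⟩⟩ := hcon
      obtain ⟨e, n, he10, hn10, he, hn, hx⟩ :=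
        H !![a, 0; 0, -b] (by simp) (by simpa using ha) (by simpa using J.neg_mem hb)
      obtain ⟨he0, he1⟩ := tri_idem_diag e he10 he
      obtain ⟨k, hk⟩ := hn
      have hn0 : IsNilpotent (n 0 0) :=
        ⟨k, by have := (tri_pow n hn10 k).2.1; rw [hk] at this; simpa using this.symm⟩
      have hn1 : IsNilpotent (n 1 1) :=
        ⟨k, by have := (tri_pow n hn10 k).2.2; rw [hk] at this; simpa using this.symm⟩
      rcases hx with hx | hx
      · have h00 : a = e 0 0 + n 0 0 := by
          have := congrFun (congrFun hx 0) 0; simpa using this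
        exact hA (e 0 0) (n 0 0) he0 hn0 h00
      · have h11 : -b = -(e 1 1) + n 1 1 := by
          have := congrFun (congrFun hx 1) 1; simpa using this
        have hb' : b = e 1 1 + -(n 1 1) := by
          have h2 := congrArg Neg.neg h11
          rw [neg_neg, neg_add, neg_neg] at h2
          exact h2
        exact hB (e 1 1) (-(n 1 1)) he1 hn1.neg hb'
  · rintro ⟨hI, hJ, hnc⟩ x hx10 hxI hxJ
    rcases hnc with hnc | hnc
    · rcases hJ (x 1 1) hxJ with ⟨eb, nb, heb, hnb, hb | hb⟩
      · obtain ⟨ea, na, hea, hna, hab⟩ := hnc (x 0 0) hxI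
        refine ⟨!![ea, 0; 0, eb], x - !![ea, 0; 0, eb], by simp, by simp [hx10],
          diag_idem hea heb, ?_, Or.inl (by abel)⟩
        refine tri_nilpotent _ (by simp [hx10]) ?_ ?_
        · have h : (x - !![ea, 0; 0, eb]) 0 0 = na := by
            simp [Matrix.sub_apply, hab]
          rw [h]; exact hna
        · have h : (x - !![ea, 0; 0, eb]) 1 1 = nb := by
            simp [Matrix.sub_apply, hb]
          rw [h]; exact hnb
      · obtain ⟨ea, na, hea, hna, hab⟩ := hnc (-(x 0 0)) (I.neg_mem hxI)
        have hab' : x 0 0 = -ea + -na := by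
          have h2 := congrArg Neg.neg hab
          rw [neg_neg, neg_add] at h2
          exact h2
        refine ⟨!![ea, 0; 0, eb], x + !![ea, 0; 0, eb], by simp, by simp [hx10],
          diag_idem hea heb, ?_, Or.inr (by abel)⟩
        refine tri_nilpotent _ (by simp [hx10]) ?_ ?_
        · have h : (x + !![ea, 0; 0, eb]) 0 0 = -na := by
            simp [Matrix.add_apply, hab']
          rw [h]; exact hna.neg
        · have h : (x + !![ea, 0; 0, eb]) 1 1 = nb := by
            simp [Matrix.add_apply, hb]
          rw [h]; exact hnb
    · rcases hI (x 0 0) hxI with ⟨ea, na, hea, hna, ha | ha⟩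
      · obtain ⟨eb, nb, heb, hnb, hbb⟩ := hnc (x 1 1) hxJ
        refine ⟨!![ea, 0; 0, eb], x - !![ea, 0; 0, eb], by simp, by simp [hx10],
          diag_idem hea heb, ?_, Or.inl (by abel)⟩
        refine tri_nilpotent _ (by simp [hx10]) ?_ ?_
        · have h : (x - !![ea, 0; 0, eb]) 0 0 = na := by
            simp [Matrix.sub_apply, ha]
          rw [h]; exact hna
        · have h : (x - !![ea, 0; 0, eb]) 1 1 = nb := by
            simp [Matrix.sub_apply, hbb]
          rw [h]; exact hnb
      · obtain ⟨eb, nb, heb, hnb, hbb⟩ := hnc (-(x 1 1)) (J.neg_mem hxJ)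
        have hbb' : x 1 1 = -eb + -nb := by
          have h2 := congrArg Neg.neg hbb
          rw [neg_neg, neg_add] at h2
          exact h2
        refine ⟨!![ea, 0; 0, eb], x + !![ea, 0; 0, eb], by simp, by simp [hx10],
          diag_idem hea heb, ?_, Or.inr (by abel)⟩
        refine tri_nilpotent _ (by simp [hx10]) ?_ ?_
        · have h : (x + !![ea, 0; 0, eb]) 0 0 = na := by
            simp [Matrix.add_apply, ha]
          rw [h]; exact hna
        · have h : (x + !![ea, 0; 0, eb]) 1 1 = -nb := by
            simp [Matrix.add_apply, hbb']
          rw [h]; exact hnb.neg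
end

section
/- Let R be a commutative ring, M an R-module, and R(M) the idealization of R and M. An ideal I of R is a weak nil clean ideal of R if and only if for every submodule N of M, the ideal I(N) = {(r, n) : r ∈ I, n ∈ N} is a weak nil clean ideal of R(M). -/
open TrivSqZeroExt

/-- `I` is a weak nil clean ideal of `R` iff for every submodule `N` of `M`,
the ideal `I(N)` is a weak nil clean ideal of the idealization `R(M)`. -/
theorem weakNilCleanIdeal_idealization_iff {R M : Type*} [CommRing R] [AddCommGroup M]
    [Module R M] [Module Rᵐᵒᵖ M] [IsCentralScalar R M] (I : Ideal R) :
    (∀ x ∈ I, ∃ e n : R, IsIdempotentElem e ∧ IsNilpotent n ∧ (x = e + n ∨ x = -e + n)) ↔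
    (∀ N : Submodule R M, ∀ x : TrivSqZeroExt R M, x.fst ∈ I → x.snd ∈ N →
      ∃ e n : TrivSqZeroExt R M, IsIdempotentElem e ∧ IsNilpotent n ∧
        (x = e + n ∨ x = -e + n)) := by
  constructor
  · intro h N x hx _
    obtain ⟨e, n, he, ⟨k, hk⟩, hx'⟩ := h x.fst hx
    refine ⟨inl e, inl n + inr x.snd, ?_, ?_, ?_⟩
    · show _ * _ = _
      rw [← inl_mul, he]
    · refine Commute.isNilpotent_add (Commute.all _ _) ⟨k, ?_⟩ ⟨2, ?_⟩
      · rw [inl_pow, hk, inl_zero]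
      · rw [pow_two, inr_mul_inr]
    · rcases hx' with hx' | hx'
      · left
        ext
        · simp [hx']
        · simp
      · right
        ext
        · simp [hx']
        · simp
  · intro h x hx
    obtain ⟨e, n, he, hn, hx'⟩ := h ⊤ (inl x) (by simpa using hx) trivial
    refine ⟨e.fst, n.fst, ?_, ?_, ?_⟩
    · show _ * _ = _
      rw [← fst_mul, he]
    · exact hn.map (TrivSqZeroExt.fstHom R R M)
    · rcases hx' with hx' | hx' <;> [left; right] <;>
        simpa using congrArg TrivSqZeroExt.fst hx'
end

section
/- Let R be a ring and f an idempotent of R. An element a of the corner ring fRf is a strongly weak nil clean element of R if and only if a is a strongly weak nil clean element of fRf. -/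
/-!
If `a = ±e + n` with `e` idempotent, `n` nilpotent and `en = ne`, then `±a - (±a)²` is
nilpotent. Conversely, when `a - a²` is nilpotent, Newton's iteration for `X² - X`, run in the
(commutative) bicommutant of `a`, produces an idempotent `e` with `a - e` nilpotent that commutes
with everything commuting with `a`, in particular with `f`. Then `(1 - f) e = -(1 - f)(a - e)` is
a nilpotent idempotent, hence zero, so `e` lies in `fRf`.
-/
open Polynomial
open scoped IsMulCommutative

theorem exists_isIdempotentElem_isNilpotent_sub_of_isNilpotent {S : Type*} [CommRing S] {x : S}
    (h : IsNilpotent (x - x * x)) : ∃ e : S, IsIdempotentElem e ∧ IsNilpotent (x - e) := by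
  have hx : IsNilpotent (x * x - x) := neg_sub x (x * x) ▸ h.neg
  have hP : ∀ y : S, aeval y (X ^ 2 - X : ℤ[X]) = y * y - y := fun y ↦ by
    rw [map_sub, map_pow, aeval_X, sq]
  have hP' : aeval x (derivative (X ^ 2 - X : ℤ[X])) ^ 2 = 1 + 4 * (x * x - x) := by
    simp only [derivative_sub, derivative_X_pow_succ, Nat.cast_one, Int.reduceAdd, map_ofNat,
      pow_one, derivative_X, aeval_sub, map_mul, aeval_X, map_one]
    ring
  obtain ⟨e, ⟨hxe, he⟩, -⟩ := existsUnique_nilpotent_sub_and_aeval_eq_zero (hP x ▸ hx)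
    ((isUnit_pow_iff two_ne_zero).mp
      (hP' ▸ ((Commute.all _ _).isNilpotent_mul_left hx).isUnit_one_add))
  exact ⟨e, sub_eq_zero.mp (hP e ▸ he), hxe⟩

theorem exists_isIdempotentElem_isNilpotent_sub_forall_commute {A : Type*} [Ring A] {a : A}
    (h : IsNilpotent (a - a * a)) :
    ∃ e : A, IsIdempotentElem e ∧ IsNilpotent (a - e) ∧
      ∀ x, Commute x a → Commute x e := by
  let S := Subring.centralizer (Subring.centralizer {a} : Set A)
  have : IsMulCommutative S := .of_setLike_mul_comm fun x hx y hy ↦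
    Set.centralizer_centralizer_comm_of_comm (by simp) x hx y hy
  have ha : a ∈ S := Set.subset_centralizer_centralizer rfl
  obtain ⟨e, he, hae⟩ := exists_isIdempotentElem_isNilpotent_sub_of_isNilpotent
    (x := (⟨a, ha⟩ : S)) ((IsNilpotent.map_iff Subtype.val_injective (f := S.subtype)).mp h)
  refine ⟨e, he.map S.subtype, hae.map S.subtype, fun x hx ↦ e.2 x ?_⟩
  simpa [Set.mem_centralizer_iff] using hx.eq.symm

theorem IsIdempotentElem.isNilpotent_add_sub_mul_self {R : Type*} [Ring R] {e n : R}
    (he : IsIdempotentElem e) (hn : IsNilpotent n) (hen : Commute e n) :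
    IsNilpotent ((e + n) - (e + n) * (e + n)) := by
  have : (e + n) - (e + n) * (e + n) = n * (1 - 2 * e - n) := by
    linear_combination (norm := noncomm_ring) -he.eq - hen.eq
  rw [this]
  exact Commute.isNilpotent_mul_right
    (((Commute.one_right n).sub_right ((Commute.ofNat_right n 2).mul_right hen.symm)).sub_right
      (.refl n)) hn

theorem IsIdempotentElem.mul_eq_right_of_isNilpotent_sub {R : Type*} [Ring R] {f a e : R}
    (hf : IsIdempotentElem f) (he : IsIdempotentElem e) (hfa : f * a = a) (hfa_comm : Commute f a)
    (hfe : Commute f e) (hae : IsNilpotent (a - e)) : f * e = e := by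
  have hidem : IsIdempotentElem ((1 - f) * e) :=
    hf.one_sub.mul_of_commute ((Commute.one_left e).sub_left hfe) he
  have hnil : IsNilpotent ((1 - f) * e) := by
    have : (1 - f) * e = -((1 - f) * (a - e)) := by
      rw [mul_sub, sub_mul 1 f a, one_mul, hfa, sub_self, zero_sub, neg_neg]
    rw [this]
    exact (((Commute.one_left _).sub_left (hfa_comm.sub_right hfe)).isNilpotent_mul_left hae).neg
  have := eq_of_isNilpotent_sub_of_isIdempotentElem_of_commute hidem .zero (by simpa using hnil)
    (.zero_right _)
  rwa [sub_mul, one_mul, sub_eq_zero, eq_comm] at this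

theorem IsIdempotentElem.exists_corner_eq_add_of_isNilpotent_sub_mul_self {R : Type*} [Ring R]
    {f a : R} (hf : IsIdempotentElem f) (ha : f * a * f = a) (h : IsNilpotent (a - a * a)) :
    ∃ e n : R, f * e * f = e ∧ f * n * f = n ∧ IsIdempotentElem e ∧ IsNilpotent n ∧
      e * n = n * e ∧ a = e + n := by
  have hfa : f * a = a := by rw [← ha, ← mul_assoc, ← mul_assoc, hf.eq]
  have haf : a * f = a := by rw [← ha, mul_assoc, hf.eq]
  obtain ⟨e, he, hae, hcomm⟩ := exists_isIdempotentElem_isNilpotent_sub_forall_commute h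
  have hfa_comm : Commute f a := hfa.trans haf.symm
  have hfe : Commute f e := hcomm f hfa_comm
  have hfe' : f * e = e := hf.mul_eq_right_of_isNilpotent_sub he hfa hfa_comm hfe hae
  have hfef : f * e * f = e := by rw [hfe', ← hfe.eq, hfe']
  refine ⟨e, a - e, hfef, by rw [mul_sub, sub_mul, ha, hfef], he, hae, ?_, by abel⟩
  exact ((hcomm a (.refl a)).symm.sub_right (.refl e)).eq

/-- For an idempotent `f` of `R` and `a ∈ fRf`, `a` is a strongly weak nil
clean element of `R` iff it is a strongly weak nil clean element of the corner ring `fRf`. -/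
theorem stronglyWeakNilClean_corner_iff {R : Type*} [Ring R] (f : R)
    (hf : IsIdempotentElem f) (a : R) (ha : f * a * f = a) :
    (∃ e n : R, IsIdempotentElem e ∧ IsNilpotent n ∧ e * n = n * e ∧
      (a = e + n ∨ a = -e + n)) ↔
    (∃ e n : R, f * e * f = e ∧ f * n * f = n ∧ IsIdempotentElem e ∧ IsNilpotent n ∧
      e * n = n * e ∧ (a = e + n ∨ a = -e + n)) := by
  refine ⟨?_, fun ⟨e, n, _, _, he, hn, hen, hae⟩ ↦ ⟨e, n, he, hn, hen, hae⟩⟩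
  rintro ⟨e, n, he, hn, hen, hae | hae⟩
  · obtain ⟨e', n', hfe, hfn, he', hn', hen', rfl⟩ :=
      hf.exists_corner_eq_add_of_isNilpotent_sub_mul_self ha
        (hae ▸ he.isNilpotent_add_sub_mul_self hn hen)
    exact ⟨e', n', hfe, hfn, he', hn', hen', .inl rfl⟩
  · have hna : -a = e + -n := by rw [hae, neg_add, neg_neg]
    obtain ⟨e', n', hfe, hfn, he', hn', hen', hna'⟩ :=
      hf.exists_corner_eq_add_of_isNilpotent_sub_mul_self (by rw [mul_neg, neg_mul, ha])
        (hna ▸ he.isNilpotent_add_sub_mul_self hn.neg (Commute.neg_right hen))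
    refine ⟨e', -n', hfe, by rw [mul_neg, neg_mul, hfn], he', hn'.neg,
      by rw [mul_neg, neg_mul, hen'], .inr ?_⟩
    rw [← neg_neg a, hna', neg_add]
end

section
/- If R is a strongly weak nil clean ring and f is any idempotent of R, then the corner ring fRf is strongly weak nil clean. -/
private lemma corner_idem_aux {R : Type*} [Ring R] (f e m b : R)
    (hf : IsIdempotentElem f) (he : IsIdempotentElem e) (hm : IsNilpotent m)
    (hcomm : Commute e m) (hb : b = e + m) (hfb : f * b * f = b) :
    f * e = e ∧ e * f = e := by
  obtain ⟨k, hk⟩ := hm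
  set K := k + 1 with hK
  have hmK : m ^ K = 0 := by rw [hK, pow_succ, hk, zero_mul]
  -- b is f-invariant on both sides
  have hfbl : f * b = b := by
    conv_lhs => rw [← hfb]
    rw [← mul_assoc, ← mul_assoc, hf]; exact hfb
  have hfbr : b * f = b := by
    conv_lhs => rw [← hfb]
    rw [mul_assoc, hf]; exact hfb
  have hcomm1 : Commute e (1 + m) := (Commute.one_right e).add_right hcomm
  have heb : e * b = e * (1 + m) := by
    rw [hb, mul_add, mul_add, he, mul_one]
  have h1 : ∀ j, e * b ^ j = e * (1 + m) ^ j := by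
    intro j
    induction j with
    | zero => simp
    | succ j ih =>
      rw [pow_succ, ← mul_assoc, ih, (hcomm1.pow_right j).eq, mul_assoc, heb,
        ← mul_assoc, ← (hcomm1.pow_right j).eq, mul_assoc, ← pow_succ]
  have hcomm2 : Commute (1 - e) m := (Commute.one_left m).sub_left hcomm
  have heb2 : (1 - e) * b = (1 - e) * m := by
    rw [hb, sub_mul, sub_mul, one_mul, one_mul, mul_add, he]
    abel
  have h2 : ∀ j, (1 - e) * b ^ j = (1 - e) * m ^ j := by
    intro j
    induction j with
    | zero => simp
    | succ j ih =>
      rw [pow_succ, ← mul_assoc, ih, (hcomm2.pow_right j).eq, mul_assoc, heb2,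
        ← mul_assoc, ← (hcomm2.pow_right j).eq, mul_assoc, ← pow_succ]
  have hbK : b ^ K = e * (1 + m) ^ K := by
    have : b ^ K = e * b ^ K + (1 - e) * b ^ K := by
      rw [sub_mul, one_mul]; abel
    rw [this, h1, h2, hmK, mul_zero, add_zero]
  have hu : IsUnit ((1 + m) ^ K) := (IsNilpotent.isUnit_one_add ⟨k, hk⟩).pow K
  have hfbK : f * b ^ K = b ^ K := by
    rw [hK, pow_succ']
    rw [← mul_assoc, hfbl]
  have hbKf : b ^ K * f = b ^ K := by
    rw [hK, pow_succ, mul_assoc, hfbr]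
  constructor
  · -- f * e = e
    refine hu.mul_right_cancel ?_
    rw [mul_assoc, ← hbK, hfbK, hbK]
  · -- e * f = e
    have hcu : Commute e ((1 + m) ^ K) := hcomm1.pow_right K
    obtain ⟨u, huu⟩ := hu
    have key : e * ↑u * f = e * ↑u := by rw [huu, ← hbK, hbKf]
    have hcu' : Commute e ↑u⁻¹ := by
      have : Commute e ↑u := by rw [huu]; exact hcu
      exact this.units_inv_right
    have hinv : (↑u⁻¹ : R) * (e * ↑u) = e := by
      rw [← mul_assoc, ← hcu'.eq, mul_assoc, u.inv_mul, mul_one]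
    calc e * f = ↑u⁻¹ * (e * ↑u) * f := by rw [hinv]
      _ = ↑u⁻¹ * (e * ↑u) := by rw [mul_assoc, key]
      _ = e := hinv

/-- If `R` is strongly weak nil clean and `f` is an idempotent, then the
corner ring `fRf` is strongly weak nil clean. -/
theorem corner_stronglyWeakNilClean {R : Type*} [Ring R]
    (h : ∀ x : R, ∃ e n : R, IsIdempotentElem e ∧ IsNilpotent n ∧ e * n = n * e ∧
      (x = e + n ∨ x = -e + n))
    (f : R) (hf : IsIdempotentElem f) :
    ∀ a : R, f * a * f = a → ∃ e n : R, f * e * f = e ∧ f * n * f = n ∧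
      IsIdempotentElem e ∧ IsNilpotent n ∧ e * n = n * e ∧ (a = e + n ∨ a = -e + n) := by
  intro a hfa
  obtain ⟨e, n, he, hn, hen, hcase⟩ := h a
  have hcomm : Commute e n := hen
  rcases hcase with hc | hc
  · -- a = e + n
    obtain ⟨hfe, hef⟩ := corner_idem_aux f e n a hf he hn hcomm hc hfa
    have hfef : f * e * f = e := by rw [hfe, hef]
    refine ⟨e, n, hfef, ?_, he, hn, hen, Or.inl hc⟩
    have : n = a - e := by rw [hc]; abel
    rw [this, mul_sub, sub_mul, hfa, hfef]
  · -- a = -e + n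
    have hc' : -a = e + (-n) := by rw [hc]; abel
    have hfa' : f * (-a) * f = -a := by rw [mul_neg, neg_mul, hfa]
    obtain ⟨hfe, hef⟩ := corner_idem_aux f e (-n) (-a) hf he hn.neg hcomm.neg_right hc' hfa'
    have hfef : f * e * f = e := by rw [hfe, hef]
    refine ⟨e, n, hfef, ?_, he, hn, hen, Or.inr hc⟩
    have : n = a + e := by rw [hc]; abel
    rw [this, mul_add, add_mul, hfa, hfef]
end
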